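/- arXiv:2309.06499 — 2 statements merged into one kernel-verified Lean document; each statement's English description precedes it below -/
import Mathlib

section
/- Suppose h_b(b⁻) ≥ γ where γ ≥ √(2 αᵀΛα)·erf⁻¹(1-2ε) - ξ(b⁻), and h_b(b⁺) = h_b(b⁻) + αᵀθ + ξ(b⁻) with αᵀθ ~ N(0, αᵀΛα), αᵀΛα > 0, ε ∈ (0, 1/2). Then Pr[h_b(b⁺) ≥ 0] ≥ 1 - ε. -/
open MeasureTheory ProbabilityTheory Matrix

/-- The standard error function. -/
noncomputable def erf (x : ℝ) : ℝ :=
  (2 / Real.sqrt Real.pi) * ∫ t in (0:ℝ)..x, Real.exp (-t ^ 2)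

/-- The inverse error function. -/
noncomputable def erfInv : ℝ → ℝ := Function.invFun erf

/-!
Writing `t = h_b(b⁻) + ξ`, the event `h_b(b⁺) ≥ 0` is `αᵀθ ≥ -t`. As `αᵀθ` is a centred Gaussian
of variance `σ² = αᵀΛα`, symmetry and the substitution `x = √(2σ²) u` give it probability
`(1 + erf (t / √(2σ²))) / 2`. The margin says `t / √(2σ²) ≥ erf⁻¹(1 - 2ε)`, so by monotonicity of
`erf` this is at least `(1 + (1 - 2ε)) / 2 = 1 - ε`.
-/

open Set Filter Topology NNReal

section Erf

lemma integrable_exp_neg_sq : Integrable fun t : ℝ => Real.exp (-t ^ 2) := by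
  simpa using integrable_exp_neg_mul_sq one_pos

lemma erf_neg (x : ℝ) : erf (-x) = -erf x := by
  have h := intervalIntegral.integral_comp_neg (a := 0) (b := x) fun t : ℝ => Real.exp (-t ^ 2)
  simp only [neg_sq, neg_zero] at h
  rw [erf, erf, intervalIntegral.integral_symm (-x) 0, ← h]
  ring

lemma continuous_erf : Continuous erf :=
  continuous_const.mul <| intervalIntegral.continuous_primitive
    (fun _ _ => integrable_exp_neg_sq.intervalIntegrable) 0

lemma monotone_erf : Monotone erf := by
  intro x y hxy
  have hsplit : (∫ t in (0:ℝ)..y, Real.exp (-t ^ 2)) - ∫ t in (0:ℝ)..x, Real.exp (-t ^ 2)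
      = ∫ t in x..y, Real.exp (-t ^ 2) :=
    intervalIntegral.integral_interval_sub_left
      integrable_exp_neg_sq.intervalIntegrable integrable_exp_neg_sq.intervalIntegrable
  have hnonneg : 0 ≤ ∫ t in x..y, Real.exp (-t ^ 2) :=
    intervalIntegral.integral_nonneg hxy fun t _ => (Real.exp_pos _).le
  rw [erf, erf, ← sub_nonneg, ← mul_sub, hsplit]
  positivity

lemma tendsto_erf_atTop : Tendsto erf atTop (𝓝 1) := by
  have hhalf : ∫ t in Ioi (0:ℝ), Real.exp (-t ^ 2) = Real.sqrt Real.pi / 2 := by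
    simpa using integral_gaussian_Ioi 1
  have h := (intervalIntegral_tendsto_integral_Ioi (0:ℝ) integrable_exp_neg_sq.integrableOn
    tendsto_id).const_mul (2 / Real.sqrt Real.pi)
  rwa [hhalf, div_mul_div_cancel₀ (by positivity), div_self two_ne_zero] at h

lemma tendsto_erf_atBot : Tendsto erf atBot (𝓝 (-1)) := by
  have h := (tendsto_erf_atTop.comp tendsto_neg_atBot_atTop).neg
  simpa [Function.comp_def, erf_neg] using h

lemma erf_erfInv {y : ℝ} (hy : y ∈ Ioo (-1) 1) : erf (erfInv y) = y := by
  obtain ⟨a, ha⟩ := (tendsto_erf_atBot.eventually (eventually_lt_nhds hy.1)).exists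
  obtain ⟨b, hb⟩ := (tendsto_erf_atTop.eventually (eventually_gt_nhds hy.2)).exists
  exact Function.invFun_eq (intermediate_value_univ a b continuous_erf ⟨ha.le, hb.le⟩)

end Erf

section GaussianTail

variable {v : ℝ≥0}

lemma gaussianReal_zero_Ici_neg (t : ℝ) :
    gaussianReal 0 v (Ici (-t)) = gaussianReal 0 v (Iic t) := by
  have h := congrArg (· (Ici (-t))) (gaussianReal_map_neg (μ := 0) (v := v))
  simp only [neg_zero] at h
  rw [← h, Measure.map_apply measurable_neg measurableSet_Ici]
  congr 1
  ext x
  simp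

lemma measureReal_gaussianReal_eq_integral (μ : ℝ) (hv : v ≠ 0) (s : Set ℝ) :
    (gaussianReal μ v).real s = ∫ x in s, gaussianPDFReal μ v x := by
  rw [measureReal_def, gaussianReal_apply_eq_integral μ hv,
    ENNReal.toReal_ofReal (setIntegral_nonneg_of_ae (ae_of_all _ (gaussianPDFReal_nonneg μ v)))]

lemma measureReal_gaussianReal_zero_Iic_zero (hv : v ≠ 0) :
    (gaussianReal 0 v).real (Iic 0) = 1 / 2 := by
  have := nullSingletonClass_gaussianReal (μ := 0) hv
  have hsymm : (gaussianReal 0 v).real (Iic 0) = (gaussianReal 0 v).real (Ioi 0) := by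
    rw [measureReal_congr Ioi_ae_eq_Ici, measureReal_def, measureReal_def,
      ← gaussianReal_zero_Ici_neg, neg_zero]
  have htotal := measureReal_add_measureReal_compl (μ := gaussianReal 0 v)
    (measurableSet_Iic (a := (0:ℝ)))
  rw [compl_Iic, probReal_univ] at htotal
  linarith

lemma intervalIntegral_gaussianPDFReal_zero (hv : v ≠ 0) (t : ℝ) :
    ∫ x in (0:ℝ)..t, gaussianPDFReal 0 v x = erf (t / Real.sqrt (2 * v)) / 2 := by
  set s := Real.sqrt (2 * v)
  have hs : 0 < s := Real.sqrt_pos.mpr (by positivity)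
  have hpdf : ∀ x,
      gaussianPDFReal 0 v x = (Real.sqrt Real.pi * s)⁻¹ * Real.exp (-(x / s) ^ 2) := by
    intro x
    rw [gaussianPDFReal, sub_zero, ← Real.sqrt_mul Real.pi_pos.le, div_pow,
      Real.sq_sqrt (by positivity), neg_div]
    ring_nf
  simp_rw [hpdf]
  rw [intervalIntegral.integral_const_mul,
    intervalIntegral.integral_comp_div (fun u => Real.exp (-u ^ 2)) hs.ne', zero_div, erf,
    smul_eq_mul]
  field_simp

lemma measureReal_gaussianReal_zero_Iic (hv : v ≠ 0) (t : ℝ) :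
    (gaussianReal 0 v).real (Iic t) = (1 + erf (t / Real.sqrt (2 * v))) / 2 := by
  have hint := integrable_gaussianPDFReal 0 v
  have hsplit := intervalIntegral.integral_Iic_sub_Iic (b := t) (a := 0)
    hint.integrableOn hint.integrableOn
  rw [← measureReal_gaussianReal_eq_integral 0 hv, ← measureReal_gaussianReal_eq_integral 0 hv,
    measureReal_gaussianReal_zero_Iic_zero hv, intervalIntegral_gaussianPDFReal_zero hv] at hsplit
  linarith

lemma measureReal_gaussianReal_zero_Ici_neg (hv : v ≠ 0) (t : ℝ) :
    (gaussianReal 0 v).real (Ici (-t)) = (1 + erf (t / Real.sqrt (2 * v))) / 2 := by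
  rw [measureReal_def, gaussianReal_zero_Ici_neg, ← measureReal_def,
    measureReal_gaussianReal_zero_Iic hv]

end GaussianTail

theorem shrunk_safe_set_guarantee_general
    {Ω : Type*} [MeasurableSpace Ω] (P : Measure Ω)
    {n : ℕ} (θ : Ω → Fin n → ℝ) (Λ : Matrix (Fin n) (Fin n) ℝ) (α : Fin n → ℝ)
    (hminus ξ γ ε : ℝ) (hplus : Ω → ℝ)
    (hpos : 0 < α ⬝ᵥ Λ.mulVec α)
    (hε : ε ∈ Set.Ioo (0:ℝ) (1/2))
    (hlaw : Measure.map (fun ω => α ⬝ᵥ θ ω) P =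
      gaussianReal 0 (α ⬝ᵥ Λ.mulVec α).toNNReal)
    (hγ : γ ≥ Real.sqrt (2 * (α ⬝ᵥ Λ.mulVec α)) * erfInv (1 - 2 * ε) - ξ)
    (hhm : hminus ≥ γ)
    (hdecomp : ∀ ω, hplus ω = hminus + α ⬝ᵥ θ ω + ξ) :
    (P {ω | hplus ω ≥ 0}).toReal ≥ 1 - ε := by
  obtain ⟨hε0, hε1⟩ := hε
  set σ2 := α ⬝ᵥ Λ.mulVec α
  have hv : σ2.toNNReal ≠ 0 := by simpa using hpos
  have hmeas : AEMeasurable (fun ω => α ⬝ᵥ θ ω) P :=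
    .of_map_ne_zero (by rw [hlaw]; exact IsProbabilityMeasure.ne_zero _)
  have hevent :
      {ω | hplus ω ≥ 0} = (fun ω => α ⬝ᵥ θ ω) ⁻¹' Ici (-(hminus + ξ)) := by
    ext ω
    simp only [mem_ofPred_eq, mem_preimage, mem_Ici, hdecomp ω]
    constructor <;> intro h <;> linarith
  have hmargin : erfInv (1 - 2 * ε) ≤ (hminus + ξ) / Real.sqrt (2 * σ2) := by
    rw [le_div_iff₀ (Real.sqrt_pos.mpr (by positivity))]
    linarith
  have herf : erf (erfInv (1 - 2 * ε)) = 1 - 2 * ε :=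
    erf_erfInv ⟨by linarith, by linarith⟩
  rw [hevent, ← Measure.map_apply_of_aemeasurable hmeas measurableSet_Ici, hlaw,
    ← measureReal_def, measureReal_gaussianReal_zero_Ici_neg hv, Real.coe_toNNReal _ hpos.le]
  linarith [monotone_erf hmargin]

/-- Theorem 3 of the paper (shrunk safe set guarantee): if `h_b(b⁻) ≥ γ` with
`γ ≥ √(2 αᵀΛα)·erf⁻¹(1-2ε) - ξ(b⁻)`, the innovation satisfies
`αᵀθ ~ N(0, αᵀΛα)` with `αᵀΛα > 0`, `ε ∈ (0, 1/2)`, and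
`h_b(b⁺) = h_b(b⁻) + αᵀθ + ξ(b⁻)`, then `Pr[h_b(b⁺) ≥ 0] ≥ 1 - ε`. -/
theorem shrunk_safe_set_guarantee
    {Ω : Type*} [MeasurableSpace Ω] (P : Measure Ω) [IsProbabilityMeasure P]
    {n : ℕ} (θ : Ω → Fin n → ℝ) (Λ : Matrix (Fin n) (Fin n) ℝ) (α : Fin n → ℝ)
    (hminus ξ γ ε : ℝ) (hplus : Ω → ℝ)
    (hpos : 0 < α ⬝ᵥ Λ.mulVec α)
    (hε : ε ∈ Set.Ioo (0:ℝ) (1/2))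
    (hlaw : Measure.map (fun ω => α ⬝ᵥ θ ω) P =
      gaussianReal 0 (α ⬝ᵥ Λ.mulVec α).toNNReal)
    (hγ : γ ≥ Real.sqrt (2 * (α ⬝ᵥ Λ.mulVec α)) * erfInv (1 - 2 * ε) - ξ)
    (hhm : hminus ≥ γ)
    (hdecomp : ∀ ω, hplus ω = hminus + α ⬝ᵥ θ ω + ξ) :
    (P {ω | hplus ω ≥ 0}).toReal ≥ 1 - ε :=
  shrunk_safe_set_guarantee_general P θ Λ α hminus ξ γ ε hplus hpos hε hlaw hγ hhm hdecomp
end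

section
/- Second-order exponential CBF: let h : [t₀, ∞) → ℝ be twice differentiable satisfying ḧ(t) + ζ₂ ḣ(t) + ζ₁ h(t) ≥ 0 where ζ₁, ζ₂ > 0 are chosen so that the polynomial s² + ζ₂ s + ζ₁ has real negative roots -λ₁, -λ₂ with λ₁, λ₂ > 0. If h(t₀) ≥ 0 and ḣ(t₀) + λ₂ h(t₀) ≥ 0, then h(t) ≥ 0 for all t ≥ t₀. -/
/-! An integrating factor turns `ḟ + λ f ≥ 0` into monotonicity of `f e^{λt}`, so a
function with `f(t₀) ≥ 0` stays nonnegative. The second-order condition factors as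
`(d/dt + λ₁)(d/dt + λ₂) h ≥ 0`: applied to `q = ḣ + λ₂ h` with rate `λ₁`, this gives
`q ≥ 0`, and applied to `h` with rate `λ₂` it then gives `h ≥ 0`. -/

open Real Set

theorem hasDerivAt_mul_exp_mul {f : ℝ → ℝ} {f' lam t : ℝ} (hf : HasDerivAt f f' t) :
    HasDerivAt (fun s => f s * exp (lam * s)) ((f' + lam * f t) * exp (lam * t)) t := by
  have hexp : HasDerivAt (fun s => exp (lam * s)) (exp (lam * t) * lam) t := by
    simpa using ((hasDerivAt_id t).const_mul lam).exp
  exact (hf.mul hexp).congr_deriv (by ring)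

theorem nonneg_of_deriv_add_mul_nonneg {f : ℝ → ℝ} {t₀ lam : ℝ} (hf : Differentiable ℝ f)
    (hineq : ∀ t, t₀ ≤ t → 0 ≤ deriv f t + lam * f t) (h0 : 0 ≤ f t₀) :
    ∀ t, t₀ ≤ t → 0 ≤ f t := by
  intro t ht
  have hg : ∀ s, HasDerivAt (fun s => f s * exp (lam * s))
      ((deriv f s + lam * f s) * exp (lam * s)) s :=
    fun s => hasDerivAt_mul_exp_mul (hf s).hasDerivAt
  have hmono : MonotoneOn (fun s => f s * exp (lam * s)) (Ici t₀) := by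
    refine monotoneOn_of_hasDerivWithinAt_nonneg (convex_Ici t₀)
      (fun s _ => (hg s).continuousAt.continuousWithinAt)
      (fun s _ => (hg s).hasDerivWithinAt) fun s hs => ?_
    rw [interior_Ici] at hs
    exact mul_nonneg (hineq s hs.le) (exp_pos _).le
  have hgt : 0 ≤ f t * exp (lam * t) :=
    (mul_nonneg h0 (exp_pos _).le).trans (hmono self_mem_Ici ht ht)
  exact nonneg_of_mul_nonneg_left hgt (exp_pos _)

theorem deriv_deriv_add_const_mul {h : ℝ → ℝ} {lam : ℝ} (hd1 : Differentiable ℝ h)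
    (hd2 : Differentiable ℝ (deriv h)) (t : ℝ) :
    deriv (fun s => deriv h s + lam * h s) t = deriv (deriv h) t + lam * deriv h t :=
  (((hd2 t).hasDerivAt).add (((hd1 t).hasDerivAt).const_mul lam)).deriv

theorem exponential_cbf_second_order_general
    (h : ℝ → ℝ) (t₀ ζ₁ ζ₂ lam₁ lam₂ : ℝ)
    (hζ₂ : ζ₂ = lam₁ + lam₂) (hζ₁ : ζ₁ = lam₁ * lam₂)
    (hd1 : Differentiable ℝ h) (hd2 : Differentiable ℝ (deriv h))
    (hineq : ∀ t, t₀ ≤ t → deriv (deriv h) t + ζ₂ * deriv h t + ζ₁ * h t ≥ 0)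
    (h0 : h t₀ ≥ 0) (hq0 : deriv h t₀ + lam₂ * h t₀ ≥ 0) :
    ∀ t, t₀ ≤ t → h t ≥ 0 := by
  subst hζ₂ hζ₁
  have hq : ∀ t, t₀ ≤ t → 0 ≤ deriv h t + lam₂ * h t := by
    refine nonneg_of_deriv_add_mul_nonneg (lam := lam₁) (hd2.add (hd1.const_mul lam₂))
      (fun t ht => ?_) hq0
    rw [deriv_deriv_add_const_mul hd1 hd2]
    linarith [hineq t ht]
  exact nonneg_of_deriv_add_mul_nonneg hd1 hq h0

/-- Second-order exponential CBF forward invariance: if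
`ḧ + ζ₂ḣ + ζ₁h ≥ 0` with `ζ₂ = λ₁ + λ₂`, `ζ₁ = λ₁λ₂`, `λ₁, λ₂ > 0` (so that
`s² + ζ₂s + ζ₁` has real negative roots `-λ₁, -λ₂`), `h(t₀) ≥ 0` and
`ḣ(t₀) + λ₂h(t₀) ≥ 0`, then `h(t) ≥ 0` for all `t ≥ t₀`. -/
theorem exponential_cbf_second_order
    (h : ℝ → ℝ) (t₀ ζ₁ ζ₂ lam₁ lam₂ : ℝ)
    (hlam₁ : 0 < lam₁) (hlam₂ : 0 < lam₂)
    (hζ₂ : ζ₂ = lam₁ + lam₂) (hζ₁ : ζ₁ = lam₁ * lam₂)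
    (hd1 : Differentiable ℝ h) (hd2 : Differentiable ℝ (deriv h))
    (hineq : ∀ t, t₀ ≤ t → deriv (deriv h) t + ζ₂ * deriv h t + ζ₁ * h t ≥ 0)
    (h0 : h t₀ ≥ 0) (hq0 : deriv h t₀ + lam₂ * h t₀ ≥ 0) :
    ∀ t, t₀ ≤ t → h t ≥ 0 :=
  exponential_cbf_second_order_general h t₀ ζ₁ ζ₂ lam₁ lam₂ hζ₂ hζ₁ hd1 hd2 hineq h0 hq0
end
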